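/- (GLRT of Lemma 1, in closed form.) Let L ≥ 1, and for each τ ∈ {1,…,L} let y_τ, r_τ ∈ ℂ^N, B_τ ∈ ℂ^{N×M}, with Σ_τ ∈ ℂ^{N×N} Hermitian positive definite; let σ_T² > 0 and Σ_c ∈ ℂ^{M×M} Hermitian positive definite. Define the density-type functions p_τ(w) = π^{−N} det(Σ_τ)⁻¹ exp(−w^H Σ_τ⁻¹ w) for w ∈ ℂ^N, p_α(α) = (π σ_T²)⁻¹ exp(−|α|²/σ_T²) for α ∈ ℂ, and p_c(c) = π^{−M} det(Σ_c)⁻¹ exp(−c^H Σ_c⁻¹ c) for c ∈ ℂ^M. Define the likelihood ratio 𝓛 = sup_{α∈ℂ, c∈ℂ^M} [∏_τ p_τ(y_τ − r_τ α − B_τ c)] p_α(α) p_c(c) divided by sup_{c∈ℂ^M} [∏_τ p_τ(y_τ − B_τ c)] p_c(c). Then, with t₁, Q₁, t₀, Q₀ as defined below and 𝓣 = t₁^H Q₁⁻¹ t₁ − t₀^H Q₀⁻¹ t₀, one has ln 𝓛 = 𝓣 − ln(π σ_T²); consequently, for every λ > 0, 𝓛 ≥ λ if and only if 𝓣 ≥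 ln(π λ σ_T²). -/

import Mathlib

open Matrix
open scoped ComplexOrder

namespace GLRTAux

lemma star_dot_mulVec_left {m n : Type*} [Fintype m] [Fintype n]
    (A : Matrix m n ℂ) (x : n → ℂ) (v : m → ℂ) :
    star (A *ᵥ x) ⬝ᵥ v = star x ⬝ᵥ (Aᴴ *ᵥ v) := by
  rw [star_mulVec, dotProduct_mulVec]

lemma star_dot_mulVec_right {m n : Type*} [Fintype m] [Fintype n]
    (A : Matrix m n ℂ) (x : n → ℂ) (v : m → ℂ) :
    star v ⬝ᵥ (A *ᵥ x) = star (Aᴴ *ᵥ v) ⬝ᵥ x := by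
  rw [star_mulVec, conjTranspose_conjTranspose, dotProduct_mulVec]

lemma sum_mulVec' {n m : Type*} [Fintype n] [Fintype m] {ι : Type*} (s : Finset ι)
    (Ms : ι → Matrix m n ℂ) (x : n → ℂ) :
    (∑ τ ∈ s, Ms τ) *ᵥ x = ∑ τ ∈ s, Ms τ *ᵥ x := by
  ext i
  simp only [Matrix.mulVec, dotProduct, Matrix.sum_apply, Finset.sum_apply,
    Finset.sum_mul]
  rw [Finset.sum_comm]

lemma dotProduct_sum' {n : Type*} [Fintype n] {ι : Type*} (s : Finset ι)
    (v : n → ℂ) (w : ι → n → ℂ) :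
    v ⬝ᵥ (∑ τ ∈ s, w τ) = ∑ τ ∈ s, v ⬝ᵥ w τ := by
  simp only [dotProduct, Finset.sum_apply, Finset.mul_sum]
  rw [Finset.sum_comm]

lemma sum_dotProduct' {n : Type*} [Fintype n] {ι : Type*} (s : Finset ι)
    (v : n → ℂ) (w : ι → n → ℂ) :
    (∑ τ ∈ s, w τ) ⬝ᵥ v = ∑ τ ∈ s, w τ ⬝ᵥ v := by
  simp only [dotProduct, Finset.sum_apply, Finset.sum_mul]
  rw [Finset.sum_comm]

lemma expand_quad {m n : Type*} [Fintype m] [Fintype n]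
    (Ml : Matrix m m ℂ) (hM : Ml.IsHermitian)
    (A : Matrix m n ℂ) (y : m → ℂ) (x : n → ℂ) :
    star (y - A *ᵥ x) ⬝ᵥ (Ml *ᵥ (y - A *ᵥ x))
      = star x ⬝ᵥ ((Aᴴ * Ml * A) *ᵥ x)
        - star (Aᴴ *ᵥ (Ml *ᵥ y)) ⬝ᵥ x - star x ⬝ᵥ (Aᴴ *ᵥ (Ml *ᵥ y))
        + star y ⬝ᵥ (Ml *ᵥ y) := by
  have h1 : star (A *ᵥ x) ⬝ᵥ (Ml *ᵥ (A *ᵥ x)) = star x ⬝ᵥ ((Aᴴ * Ml * A) *ᵥ x) := by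
    rw [star_dot_mulVec_left, mulVec_mulVec, mulVec_mulVec, Matrix.mul_assoc]
  have h2 : star (A *ᵥ x) ⬝ᵥ (Ml *ᵥ y) = star x ⬝ᵥ (Aᴴ *ᵥ (Ml *ᵥ y)) :=
    star_dot_mulVec_left A x (Ml *ᵥ y)
  have h3 : star y ⬝ᵥ (Ml *ᵥ (A *ᵥ x)) = star (Aᴴ *ᵥ (Ml *ᵥ y)) ⬝ᵥ x := by
    rw [star_dot_mulVec_right Ml (A *ᵥ x) y, star_dot_mulVec_right A x (Mlᴴ *ᵥ y), hM.eq]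
  simp only [Matrix.mulVec_sub, star_sub, sub_dotProduct, dotProduct_sub]
  rw [h1, h2, h3]
  ring

lemma complete_square {n : Type*} [Fintype n] [DecidableEq n]
    {Q : Matrix n n ℂ} (hQ : Q.PosDef) (t x : n → ℂ) :
    star (x - Q⁻¹ *ᵥ t) ⬝ᵥ (Q *ᵥ (x - Q⁻¹ *ᵥ t))
      = star x ⬝ᵥ (Q *ᵥ x) - star t ⬝ᵥ x - star x ⬝ᵥ t + star t ⬝ᵥ (Q⁻¹ *ᵥ t) := by
  have hdet : IsUnit Q.det := (Matrix.isUnit_iff_isUnit_det Q).mp hQ.isUnit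
  have hinv : Q⁻¹ᴴ = Q⁻¹ := hQ.isHermitian.inv.eq
  have hQm : Q *ᵥ (Q⁻¹ *ᵥ t) = t := by
    rw [mulVec_mulVec, Matrix.mul_nonsing_inv _ hdet, Matrix.one_mulVec]
  have h1 : star (Q⁻¹ *ᵥ t) ⬝ᵥ (Q *ᵥ x) = star t ⬝ᵥ x := by
    rw [star_dot_mulVec_left, hinv, mulVec_mulVec, Matrix.nonsing_inv_mul _ hdet,
      Matrix.one_mulVec]
  have h2 : star (Q⁻¹ *ᵥ t) ⬝ᵥ t = star t ⬝ᵥ (Q⁻¹ *ᵥ t) := by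
    rw [star_dot_mulVec_left, hinv]
  simp only [Matrix.mulVec_sub, hQm, star_sub, sub_dotProduct, dotProduct_sub,
    h1, h2]
  ring

lemma sum_expand {L : ℕ} {m n : Type*} [Fintype m] [DecidableEq m] [Fintype n]
    (S : Fin L → Matrix m m ℂ) (hS : ∀ τ, ((S τ)⁻¹).IsHermitian)
    (A : Fin L → Matrix m n ℂ) (y : Fin L → m → ℂ) (x : n → ℂ) :
    (∑ τ, star (y τ - A τ *ᵥ x) ⬝ᵥ ((S τ)⁻¹ *ᵥ (y τ - A τ *ᵥ x)))
      = star x ⬝ᵥ ((∑ τ, (A τ)ᴴ * (S τ)⁻¹ * A τ) *ᵥ x)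
        - star (∑ τ, (A τ)ᴴ *ᵥ ((S τ)⁻¹ *ᵥ y τ)) ⬝ᵥ x
        - star x ⬝ᵥ (∑ τ, (A τ)ᴴ *ᵥ ((S τ)⁻¹ *ᵥ y τ))
        + ∑ τ, star (y τ) ⬝ᵥ ((S τ)⁻¹ *ᵥ y τ) := by
  rw [Finset.sum_congr rfl fun τ _ => expand_quad _ (hS τ) (A τ) (y τ) x]
  rw [sum_mulVec', dotProduct_sum', star_sum, sum_dotProduct', dotProduct_sum']
  simp only [Finset.sum_add_distrib, Finset.sum_sub_distrib]

lemma key_expand {L : ℕ} {m n : Type*} [Fintype m] [DecidableEq m] [Fintype n] [DecidableEq n]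
    (S : Fin L → Matrix m m ℂ) (hS : ∀ τ, ((S τ)⁻¹).IsHermitian)
    (A : Fin L → Matrix m n ℂ) (y : Fin L → m → ℂ)
    {D Q : Matrix n n ℂ} (hQpd : Q.PosDef)
    (hQeq : Q = (∑ τ, (A τ)ᴴ * (S τ)⁻¹ * A τ) + D)
    {t : n → ℂ} (hteq : t = ∑ τ, (A τ)ᴴ *ᵥ ((S τ)⁻¹ *ᵥ y τ)) (x : n → ℂ) :
    (∑ τ, star (y τ - A τ *ᵥ x) ⬝ᵥ ((S τ)⁻¹ *ᵥ (y τ - A τ *ᵥ x))) + star x ⬝ᵥ (D *ᵥ x)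
      = star (x - Q⁻¹ *ᵥ t) ⬝ᵥ (Q *ᵥ (x - Q⁻¹ *ᵥ t))
        + (∑ τ, star (y τ) ⬝ᵥ ((S τ)⁻¹ *ᵥ y τ)) - star t ⬝ᵥ (Q⁻¹ *ᵥ t) := by
  rw [sum_expand S hS A y x, ← hteq, complete_square hQpd t x, hQeq, Matrix.add_mulVec,
    dotProduct_add]
  ring

lemma psd_sum {L : ℕ} {m n : Type*} [Fintype m] [DecidableEq m] [Fintype n]
    (S : Fin L → Matrix m m ℂ) (hS : ∀ τ, ((S τ)⁻¹).PosSemidef)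
    (A : Fin L → Matrix m n ℂ) :
    (∑ τ, (A τ)ᴴ * (S τ)⁻¹ * A τ).PosSemidef :=
  Finset.sum_induction _ _ (fun _ _ ha hb => ha.add hb) Matrix.PosSemidef.zero
    (fun τ _ => ((hS τ).conjTranspose_mul_mul_same (A τ)))

lemma star_sum_elim {a b : Type*} (u : a → ℂ) (v : b → ℂ) :
    star (Sum.elim u v) = Sum.elim (star u) (star v) := by
  funext i; cases i <;> rfl

lemma fromBlocks_posDef {a b : Type*} [Fintype a] [Fintype b] [DecidableEq a] [DecidableEq b]
    {A : Matrix a a ℂ} {D : Matrix b b ℂ} (hA : A.PosDef) (hD : D.PosDef) :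
    (Matrix.fromBlocks A 0 0 D).PosDef := by
  refine Matrix.PosDef.of_dotProduct_mulVec_pos ?_ ?_
  · show _ᴴ = _
    rw [Matrix.fromBlocks_conjTranspose]
    simp [hA.1.eq, hD.1.eq]
  · intro x hx
    have hxe : Sum.elim (fun i => x (Sum.inl i)) (fun j => x (Sum.inr j)) = x := by
      funext i; cases i <;> rfl
    rw [← hxe] at hx ⊢
    rw [Matrix.fromBlocks_mulVec, star_sum_elim]
    simp only [Matrix.zero_mulVec, add_zero, zero_add]
    rw [sumElim_dotProduct_sumElim]
    rcases eq_or_ne (fun i => x (Sum.inl i)) 0 with hu | hu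
    · have hv : (fun j => x (Sum.inr j)) ≠ 0 := by
        intro hv0
        apply hx
        rw [hu, hv0]
        funext i; cases i <;> rfl
      rw [hu]
      simpa using hD.dotProduct_mulVec_pos hv
    · exact add_pos_of_pos_of_nonneg (hA.dotProduct_mulVec_pos hu) (hD.posSemidef.dotProduct_mulVec_nonneg _)

lemma sum_fromBlocks {ι a b c d R : Type*} [AddCommMonoid R] (s : Finset ι)
    (A : ι → Matrix a c R) (B : ι → Matrix a d R) (C : ι → Matrix b c R)
    (D : ι → Matrix b d R) :
    ∑ τ ∈ s, Matrix.fromBlocks (A τ) (B τ) (C τ) (D τ)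
      = Matrix.fromBlocks (∑ τ ∈ s, A τ) (∑ τ ∈ s, B τ) (∑ τ ∈ s, C τ) (∑ τ ∈ s, D τ) := by
  ext (i | i) (j | j) <;> simp [Matrix.sum_apply]

lemma ciSup_eq_of_forall_le {ι : Sort*} [Nonempty ι] (f : ι → ℝ) (x₀ : ι)
    (h : ∀ x, f x ≤ f x₀) : (⨆ x, f x) = f x₀ :=
  le_antisymm (ciSup_le h)
    (le_ciSup ⟨f x₀, by rintro y ⟨x, rfl⟩; exact h x⟩ x₀)

lemma ciSup2_eq {κ : Type*} [Nonempty κ] (f : ℂ → κ → ℝ) (a₀ : ℂ) (c₀ : κ)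
    (h : ∀ a c, f a c ≤ f a₀ c₀) : (⨆ a, ⨆ c, f a c) = f a₀ c₀ := by
  apply le_antisymm
  · exact ciSup_le fun a => ciSup_le fun c => h a c
  · have h1 : f a₀ c₀ ≤ ⨆ c, f a₀ c :=
      le_ciSup ⟨f a₀ c₀, by rintro y ⟨c, rfl⟩; exact h a₀ c⟩ c₀
    have h2 : (⨆ c, f a₀ c) ≤ ⨆ a, ⨆ c, f a c :=
      le_ciSup (f := fun a => ⨆ c, f a c)
        ⟨f a₀ c₀, by rintro y ⟨a, rfl⟩; exact ciSup_le (h a)⟩ a₀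
    exact h1.trans h2

end GLRTAux

open GLRTAux in
/-- Closed form of the GLRT of Lemma 1.  With the density-type functions
`p_τ(w) = π^{−N} det(Σ_τ)⁻¹ exp(−wᴴ Σ_τ⁻¹ w)`, `p_α(α) = (π σ_T²)⁻¹ exp(−|α|²/σ_T²)`,
`p_c(c) = π^{−M} det(Σ_c)⁻¹ exp(−cᴴ Σ_c⁻¹ c)`, the likelihood ratio
`𝓛 = sup_{α,c} [∏_τ p_τ(y_τ − r_τ α − B_τ c)] p_α(α) p_c(c) / sup_c [∏_τ p_τ(y_τ − B_τ c)] p_c(c)`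
satisfies `ln 𝓛 = 𝓣 − ln(π σ_T²)` where `𝓣 = t₁ᴴ Q₁⁻¹ t₁ − t₀ᴴ Q₀⁻¹ t₀`; hence
for every `λ > 0`, `𝓛 ≥ λ ↔ 𝓣 ≥ ln(π λ σ_T²)`.
`ℂ^{M+1}` is represented as `Fin 1 ⊕ Fin M → ℂ`; `p_τ, p_α, p_c, 𝓛, Q₁, t₁, Q₀, t₀, 𝓣`
are pinned down by defining hypotheses. -/
theorem glrt_closed_form
    {L N M : ℕ} (hL : 1 ≤ L)
    (y r : Fin L → Fin N → ℂ)
    (B : Fin L → Matrix (Fin N) (Fin M) ℂ)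
    (S : Fin L → Matrix (Fin N) (Fin N) ℂ) (hS : ∀ τ, (S τ).PosDef)
    (σT2 : ℝ) (hσ : 0 < σT2)
    (Sc : Matrix (Fin M) (Fin M) ℂ) (hSc : Sc.PosDef)
    (pτ : Fin L → (Fin N → ℂ) → ℝ)
    (hpτ : ∀ τ w, pτ τ w =
      (Real.pi ^ N)⁻¹ * ((S τ).det.re)⁻¹ *
        Real.exp (-(star w ⬝ᵥ ((S τ)⁻¹ *ᵥ w)).re))
    (pα : ℂ → ℝ)
    (hpα : ∀ a, pα a = (Real.pi * σT2)⁻¹ * Real.exp (-(‖a‖ ^ 2 / σT2)))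
    (pc : (Fin M → ℂ) → ℝ)
    (hpc : ∀ c, pc c =
      (Real.pi ^ M)⁻¹ * (Sc.det.re)⁻¹ * Real.exp (-(star c ⬝ᵥ (Sc⁻¹ *ᵥ c)).re))
    (𝓛 : ℝ)
    (h𝓛 : 𝓛 =
      (⨆ α : ℂ, ⨆ c : Fin M → ℂ,
          (∏ τ, pτ τ (y τ - α • r τ - B τ *ᵥ c)) * pα α * pc c) /
      (⨆ c : Fin M → ℂ, (∏ τ, pτ τ (y τ - B τ *ᵥ c)) * pc c))
    (Q₁ : Matrix (Fin 1 ⊕ Fin M) (Fin 1 ⊕ Fin M) ℂ)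
    (hQ₁ : Q₁ = Matrix.fromBlocks
        (∑ τ, Matrix.replicateRow (Fin 1) (star (r τ)) * (S τ)⁻¹ *
            Matrix.replicateCol (Fin 1) (r τ) + ((1 / σT2 : ℝ) : ℂ) • 1)
        (∑ τ, Matrix.replicateRow (Fin 1) (star (r τ)) * (S τ)⁻¹ * B τ)
        (∑ τ, Matrix.replicateRow (Fin 1) (star (r τ)) * (S τ)⁻¹ * B τ)ᴴ
        (∑ τ, (B τ)ᴴ * (S τ)⁻¹ * B τ + Sc⁻¹))
    (t₁ : Fin 1 ⊕ Fin M → ℂ)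
    (ht₁ : t₁ = Sum.elim
        (fun _ : Fin 1 => ∑ τ, star (r τ) ⬝ᵥ ((S τ)⁻¹ *ᵥ y τ))
        (∑ τ, (B τ)ᴴ *ᵥ ((S τ)⁻¹ *ᵥ y τ)))
    (Q₀ : Matrix (Fin M) (Fin M) ℂ)
    (hQ₀ : Q₀ = (∑ τ, (B τ)ᴴ * (S τ)⁻¹ * B τ) + Sc⁻¹)
    (t₀ : Fin M → ℂ)
    (ht₀ : t₀ = ∑ τ, (B τ)ᴴ *ᵥ ((S τ)⁻¹ *ᵥ y τ))
    (𝓣 : ℝ)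
    (h𝓣 : 𝓣 = (star t₁ ⬝ᵥ (Q₁⁻¹ *ᵥ t₁) - star t₀ ⬝ᵥ (Q₀⁻¹ *ᵥ t₀)).re) :
    Real.log 𝓛 = 𝓣 - Real.log (Real.pi * σT2) ∧
      ∀ lam : ℝ, 0 < lam → (lam ≤ 𝓛 ↔ Real.log (Real.pi * lam * σT2) ≤ 𝓣) := by

  classical
  -- ## Positivity basics
  have hπ : 0 < Real.pi := Real.pi_pos
  have hπσ : 0 < Real.pi * σT2 := mul_pos hπ hσ
  have hdetS : ∀ τ, 0 < ((S τ).det).re := fun τ => by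
    have h := (hS τ).det_pos
    rw [Complex.lt_def] at h
    simpa using h.1
  have hdetSc : 0 < Sc.det.re := by
    have h := hSc.det_pos
    rw [Complex.lt_def] at h
    simpa using h.1
  have hcprod : 0 < ∏ τ, (Real.pi ^ N)⁻¹ * ((S τ).det.re)⁻¹ :=
    Finset.prod_pos fun τ _ => by have := hdetS τ; positivity
  have hcM : 0 < (Real.pi ^ M)⁻¹ * (Sc.det.re)⁻¹ := by have := hdetSc; positivity
  have hSinvH : ∀ τ, ((S τ)⁻¹).IsHermitian := fun τ => (hS τ).isHermitian.inv
  have hSinvPSD : ∀ τ, ((S τ)⁻¹).PosSemidef := fun τ => ((hS τ).inv).posSemidef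
  -- ## Product of the pτ densities
  have hprod : ∀ w : Fin L → Fin N → ℂ, (∏ τ, pτ τ (w τ)) =
      (∏ τ, (Real.pi ^ N)⁻¹ * ((S τ).det.re)⁻¹) *
        Real.exp (-∑ τ, (star (w τ) ⬝ᵥ ((S τ)⁻¹ *ᵥ (w τ))).re) := by
    intro w
    simp only [hpτ]
    rw [Finset.prod_mul_distrib, ← Real.exp_sum, Finset.sum_neg_distrib]
  -- ## Denominator
  have hQ₀pd : Q₀.PosDef := by
    rw [hQ₀]; exact Matrix.PosDef.posSemidef_add (psd_sum S hSinvPSD B) hSc.inv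
  have key₀ := fun c : Fin M → ℂ => key_expand S hSinvH B y hQ₀pd hQ₀ ht₀ c
  set m₀ : Fin M → ℂ := Q₀⁻¹ *ᵥ t₀ with hm₀_def
  have hg₀ : ∀ c : Fin M → ℂ, 0 ≤ (star (c - m₀) ⬝ᵥ (Q₀ *ᵥ (c - m₀))).re := fun c => by
    have h := hQ₀pd.posSemidef.dotProduct_mulVec_nonneg (c - m₀)
    rw [Complex.le_def] at h
    simpa using h.1
  have hden_fun : ∀ c : Fin M → ℂ, (∏ τ, pτ τ (y τ - B τ *ᵥ c)) * pc c
      = ((∏ τ, (Real.pi ^ N)⁻¹ * ((S τ).det.re)⁻¹) * ((Real.pi ^ M)⁻¹ * (Sc.det.re)⁻¹)) *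
        Real.exp ((star t₀ ⬝ᵥ m₀).re - (∑ τ, (star (y τ) ⬝ᵥ ((S τ)⁻¹ *ᵥ y τ)).re)
          - (star (c - m₀) ⬝ᵥ (Q₀ *ᵥ (c - m₀))).re) := by
    intro c
    have hkre := congrArg Complex.re (key₀ c)
    rw [Complex.add_re, Complex.sub_re, Complex.add_re, Complex.re_sum, Complex.re_sum] at hkre
    rw [hprod, hpc]
    have hexp : (-∑ τ, (star (y τ - B τ *ᵥ c) ⬝ᵥ ((S τ)⁻¹ *ᵥ (y τ - B τ *ᵥ c))).re)
        + (-(star c ⬝ᵥ (Sc⁻¹ *ᵥ c)).re)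
        = (star t₀ ⬝ᵥ m₀).re - (∑ τ, (star (y τ) ⬝ᵥ ((S τ)⁻¹ *ᵥ y τ)).re)
          - (star (c - m₀) ⬝ᵥ (Q₀ *ᵥ (c - m₀))).re := by
      linarith [hkre]
    rw [← hexp, Real.exp_add]
    ring
  have hzero₀ : (star (m₀ - m₀) ⬝ᵥ (Q₀ *ᵥ (m₀ - m₀))).re = 0 := by simp
  have hbound₀ : ∀ c : Fin M → ℂ, (∏ τ, pτ τ (y τ - B τ *ᵥ c)) * pc c ≤
      (∏ τ, pτ τ (y τ - B τ *ᵥ m₀)) * pc m₀ := by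
    intro c
    rw [hden_fun c, hden_fun m₀, hzero₀, sub_zero]
    refine mul_le_mul_of_nonneg_left (Real.exp_le_exp.mpr ?_) (by positivity)
    have := hg₀ c
    linarith
  have hden : (⨆ c : Fin M → ℂ, (∏ τ, pτ τ (y τ - B τ *ᵥ c)) * pc c)
      = ((∏ τ, (Real.pi ^ N)⁻¹ * ((S τ).det.re)⁻¹) * ((Real.pi ^ M)⁻¹ * (Sc.det.re)⁻¹)) *
        Real.exp ((star t₀ ⬝ᵥ m₀).re - (∑ τ, (star (y τ) ⬝ᵥ ((S τ)⁻¹ *ᵥ y τ)).re)) := by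
    rw [ciSup_eq_of_forall_le _ m₀ hbound₀, hden_fun m₀, hzero₀, sub_zero]
  -- ## Numerator: block structure
  set A : Fin L → Matrix (Fin N) (Fin 1 ⊕ Fin M) ℂ :=
    fun τ => Matrix.fromCols (Matrix.replicateCol (Fin 1) (r τ)) (B τ) with hA_def
  set D₁ : Matrix (Fin 1 ⊕ Fin M) (Fin 1 ⊕ Fin M) ℂ :=
    Matrix.fromBlocks (((1 / σT2 : ℝ) : ℂ) • 1) 0 0 Sc⁻¹ with hD₁_def
  have hAH : ∀ τ, (A τ)ᴴ = Matrix.fromRows (Matrix.replicateRow (Fin 1) (star (r τ))) (B τ)ᴴ := by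
    intro τ
    simp only [hA_def]
    rw [Matrix.conjTranspose_fromCols_eq_fromRows_conjTranspose, Matrix.conjTranspose_replicateCol]
  have h21 : (∑ τ, Matrix.replicateRow (Fin 1) (star (r τ)) * (S τ)⁻¹ * B τ)ᴴ
      = ∑ τ, (B τ)ᴴ * (S τ)⁻¹ * Matrix.replicateCol (Fin 1) (r τ) := by
    rw [Matrix.conjTranspose_sum]
    refine Finset.sum_congr rfl fun τ _ => ?_
    rw [Matrix.conjTranspose_mul, Matrix.conjTranspose_mul, Matrix.conjTranspose_replicateRow,
      star_star, (hSinvH τ).eq, ← Matrix.mul_assoc]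
  have hblock : ∀ τ, (A τ)ᴴ * (S τ)⁻¹ * A τ =
      Matrix.fromBlocks
        (Matrix.replicateRow (Fin 1) (star (r τ)) * (S τ)⁻¹ * Matrix.replicateCol (Fin 1) (r τ))
        (Matrix.replicateRow (Fin 1) (star (r τ)) * (S τ)⁻¹ * B τ)
        ((B τ)ᴴ * (S τ)⁻¹ * Matrix.replicateCol (Fin 1) (r τ))
        ((B τ)ᴴ * (S τ)⁻¹ * B τ) := by
    intro τ
    rw [hAH τ]
    simp only [hA_def]
    rw [Matrix.fromRows_mul, Matrix.fromRows_mul_fromCols]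
  have hQ₁eq : Q₁ = (∑ τ, (A τ)ᴴ * (S τ)⁻¹ * A τ) + D₁ := by
    rw [hQ₁, h21]
    simp only [hblock]
    rw [sum_fromBlocks, hD₁_def, Matrix.fromBlocks_add, add_zero, add_zero]
  have ht₁eq : t₁ = ∑ τ, (A τ)ᴴ *ᵥ ((S τ)⁻¹ *ᵥ y τ) := by
    have hAHv : ∀ τ (v : Fin N → ℂ), (A τ)ᴴ *ᵥ v
        = Sum.elim (fun _ : Fin 1 => star (r τ) ⬝ᵥ v) ((B τ)ᴴ *ᵥ v) := by
      intro τ v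
      rw [hAH τ, Matrix.fromRows_mulVec, Matrix.replicateRow_mulVec_eq_const]
      rfl
    rw [ht₁]
    simp only [hAHv]
    funext i
    cases i with
    | inl i => simp [Finset.sum_apply]
    | inr j => simp [Finset.sum_apply]
  have hD₁pd : D₁.PosDef := by
    rw [hD₁_def]
    refine fromBlocks_posDef ?_ hSc.inv
    rw [Matrix.smul_one_eq_diagonal]
    exact Matrix.posDef_diagonal_iff.mpr fun i => Complex.zero_lt_real.mpr (by positivity)
  have hQ₁pd : Q₁.PosDef := by
    rw [hQ₁eq]; exact Matrix.PosDef.posSemidef_add (psd_sum S hSinvPSD A) hD₁pd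
  have key₁ := fun x : Fin 1 ⊕ Fin M → ℂ => key_expand S hSinvH A y hQ₁pd hQ₁eq ht₁eq x
  set m₁ : Fin 1 ⊕ Fin M → ℂ := Q₁⁻¹ *ᵥ t₁ with hm₁_def
  have hg₁ : ∀ x : Fin 1 ⊕ Fin M → ℂ, 0 ≤ (star (x - m₁) ⬝ᵥ (Q₁ *ᵥ (x - m₁))).re := fun x => by
    have h := hQ₁pd.posSemidef.dotProduct_mulVec_nonneg (x - m₁)
    rw [Complex.le_def] at h
    simpa using h.1
  have hAx : ∀ (τ) (α : ℂ) (c : Fin M → ℂ),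
      A τ *ᵥ Sum.elim (fun _ : Fin 1 => α) c = α • r τ + B τ *ᵥ c := by
    intro τ α c
    simp only [hA_def]
    rw [Matrix.fromCols_mulVec_sumElim]
    congr 1
    funext i
    simp [Matrix.mulVec, dotProduct, mul_comm]
  have habs : ∀ α : ℂ, ((‖α‖ : ℝ) : ℂ) ^ 2 = star α * α := by
    intro α
    rw [← Complex.ofReal_pow, Complex.sq_norm]
    exact (Complex.normSq_eq_conj_mul_self).symm ▸ rfl
  have hDx : ∀ (α : ℂ) (c : Fin M → ℂ),
      star (Sum.elim (fun _ : Fin 1 => α) c) ⬝ᵥ (D₁ *ᵥ Sum.elim (fun _ : Fin 1 => α) c)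
        = ((‖α‖ ^ 2 / σT2 : ℝ) : ℂ) + star c ⬝ᵥ (Sc⁻¹ *ᵥ c) := by
    intro α c
    rw [hD₁_def, Matrix.fromBlocks_mulVec, star_sum_elim]
    simp only [Matrix.zero_mulVec, add_zero, zero_add]
    rw [sumElim_dotProduct_sumElim]
    congr 1
    rw [Matrix.smul_mulVec, Matrix.one_mulVec]
    simp only [dotProduct, Fin.sum_univ_one, Pi.star_apply, Pi.smul_apply, smul_eq_mul,
      Function.comp_apply, Sum.elim_inl]
    push_cast
    rw [habs α]
    ring
  have hfnum : ∀ (α : ℂ) (c : Fin M → ℂ),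
      (∏ τ, pτ τ (y τ - α • r τ - B τ *ᵥ c)) * pα α * pc c
      = ((∏ τ, (Real.pi ^ N)⁻¹ * ((S τ).det.re)⁻¹) * (Real.pi * σT2)⁻¹ *
          ((Real.pi ^ M)⁻¹ * (Sc.det.re)⁻¹)) *
        Real.exp ((star t₁ ⬝ᵥ m₁).re - (∑ τ, (star (y τ) ⬝ᵥ ((S τ)⁻¹ *ᵥ y τ)).re)
          - (star (Sum.elim (fun _ : Fin 1 => α) c - m₁) ⬝ᵥ
              (Q₁ *ᵥ (Sum.elim (fun _ : Fin 1 => α) c - m₁))).re) := by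
    intro α c
    have hw : ∀ τ, y τ - α • r τ - B τ *ᵥ c
        = y τ - A τ *ᵥ Sum.elim (fun _ : Fin 1 => α) c := by
      intro τ; rw [sub_sub, ← hAx τ α c]
    simp only [hw]
    rw [hprod, hpα α, hpc c]
    have hkre := congrArg Complex.re (key₁ (Sum.elim (fun _ : Fin 1 => α) c))
    rw [Complex.add_re, Complex.sub_re, Complex.add_re, Complex.re_sum, Complex.re_sum] at hkre
    have hDre := congrArg Complex.re (hDx α c)
    rw [Complex.add_re, Complex.ofReal_re] at hDre
    have hexp : (-∑ τ, (star (y τ - A τ *ᵥ Sum.elim (fun _ : Fin 1 => α) c) ⬝ᵥ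
          ((S τ)⁻¹ *ᵥ (y τ - A τ *ᵥ Sum.elim (fun _ : Fin 1 => α) c))).re)
        + (-(‖α‖ ^ 2 / σT2)) + (-(star c ⬝ᵥ (Sc⁻¹ *ᵥ c)).re)
        = (star t₁ ⬝ᵥ m₁).re - (∑ τ, (star (y τ) ⬝ᵥ ((S τ)⁻¹ *ᵥ y τ)).re)
          - (star (Sum.elim (fun _ : Fin 1 => α) c - m₁) ⬝ᵥ
              (Q₁ *ᵥ (Sum.elim (fun _ : Fin 1 => α) c - m₁))).re := by
      linarith [hkre, hDre]
    rw [← hexp, Real.exp_add, Real.exp_add]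
    ring
  have hc₀ : Sum.elim (fun _ : Fin 1 => m₁ (Sum.inl 0)) (fun j => m₁ (Sum.inr j)) = m₁ := by
    funext i
    cases i with
    | inl i =>
      have : i = 0 := Subsingleton.elim i 0
      subst this
      rfl
    | inr j => rfl
  have hzero₁ : (star (m₁ - m₁) ⬝ᵥ (Q₁ *ᵥ (m₁ - m₁))).re = 0 := by simp
  have hbound₁ : ∀ (a : ℂ) (c : Fin M → ℂ),
      (∏ τ, pτ τ (y τ - a • r τ - B τ *ᵥ c)) * pα a * pc c ≤
      (∏ τ, pτ τ (y τ - m₁ (Sum.inl 0) • r τ - B τ *ᵥ fun j => m₁ (Sum.inr j))) *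
        pα (m₁ (Sum.inl 0)) * pc (fun j => m₁ (Sum.inr j)) := by
    intro a c
    rw [hfnum a c, hfnum (m₁ (Sum.inl 0)) (fun j => m₁ (Sum.inr j)), hc₀, hzero₁, sub_zero]
    refine mul_le_mul_of_nonneg_left (Real.exp_le_exp.mpr ?_) (by positivity)
    have := hg₁ (Sum.elim (fun _ : Fin 1 => a) c)
    linarith
  have hnum : (⨆ α : ℂ, ⨆ c : Fin M → ℂ,
        (∏ τ, pτ τ (y τ - α • r τ - B τ *ᵥ c)) * pα α * pc c)
      = ((∏ τ, (Real.pi ^ N)⁻¹ * ((S τ).det.re)⁻¹) * (Real.pi * σT2)⁻¹ *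
          ((Real.pi ^ M)⁻¹ * (Sc.det.re)⁻¹)) *
        Real.exp ((star t₁ ⬝ᵥ m₁).re - (∑ τ, (star (y τ) ⬝ᵥ ((S τ)⁻¹ *ᵥ y τ)).re)) := by
    rw [ciSup2_eq _ (m₁ (Sum.inl 0)) (fun j => m₁ (Sum.inr j)) hbound₁,
      hfnum (m₁ (Sum.inl 0)) (fun j => m₁ (Sum.inr j)), hc₀, hzero₁, sub_zero]
  -- ## Putting everything together
  clear_value m₀ m₁ A D₁
  have hT : 𝓣 = (star t₁ ⬝ᵥ m₁).re - (star t₀ ⬝ᵥ m₀).re := by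
    rw [h𝓣, Complex.sub_re]
  have h𝓛' : 𝓛 = Real.exp 𝓣 / (Real.pi * σT2) := by
    rw [h𝓛, hnum, hden, hT]
    rw [show (star t₁ ⬝ᵥ m₁).re - (∑ τ, (star (y τ) ⬝ᵥ ((S τ)⁻¹ *ᵥ y τ)).re)
        = ((star t₁ ⬝ᵥ m₁).re - (star t₀ ⬝ᵥ m₀).re)
          + ((star t₀ ⬝ᵥ m₀).re - (∑ τ, (star (y τ) ⬝ᵥ ((S τ)⁻¹ *ᵥ y τ)).re)) by ring,
      Real.exp_add]
    rw [div_eq_div_iff (by positivity) (by positivity)]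
    linear_combination (∏ τ, (Real.pi ^ N)⁻¹ * ((S τ).det.re)⁻¹) *
      ((Real.pi ^ M)⁻¹ * (Sc.det.re)⁻¹) *
      Real.exp ((star t₁ ⬝ᵥ m₁).re - (star t₀ ⬝ᵥ m₀).re) *
      Real.exp ((star t₀ ⬝ᵥ m₀).re - (∑ τ, (star (y τ) ⬝ᵥ ((S τ)⁻¹ *ᵥ y τ)).re)) *
      mul_inv_cancel₀ hπσ.ne'
  refine ⟨?_, ?_⟩
  · rw [h𝓛', Real.log_div (Real.exp_ne_zero _) hπσ.ne', Real.log_exp]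
  · intro lam hlam
    rw [h𝓛', le_div_iff₀ hπσ, show Real.pi * lam * σT2 = lam * (Real.pi * σT2) by ring]
    exact (Real.log_le_iff_le_exp (by positivity)).symm
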